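/- arXiv:1705.01580 — 8 statements merged into one kernel-verified Lean document; each statement's English description precedes it below -/
import Mathlib

section
/- Let X be a Hausdorff topological space equipped with a partial order ≼ such that for every u ∈ X the order intervals [u) = {x : u ≼ x} and (u] = {x : x ≼ u} are closed. Then every nonempty compact subset D of X is chain-complete: every nonempty chain C ⊆ D has a least ≼-upper bound that belongs to D. -/
/-!
Run the chain `C` as a net along its own order. Compactness of `D` gives a cluster point `b ∈ D`
of this net. Each tail of the net lies in the closed set `[c)`, so `b` is an upper bound of `C`;
and `b` lies in the closure of `C`, which stays below every upper bound `u` because `(u]` is closed.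
-/

open Filter Set Topology

section

variable {X : Type*} [TopologicalSpace X] [Preorder X] [ClosedIciTopology X] [ClosedIicTopology X]

theorem isLUB_of_mapClusterPt_atTop {s : Set X} {b : X}
    (hb : MapClusterPt b atTop ((↑) : s → X)) : IsLUB s b := by
  refine ⟨fun c hc => ?_, fun u hu => ?_⟩
  · have htail : (↑) '' Ici (⟨c, hc⟩ : s) ∈ map ((↑) : s → X) atTop :=
      image_mem_map (Ici_mem_atTop _)
    have hsub : (↑) '' Ici (⟨c, hc⟩ : s) ⊆ Ici c := by
      rintro _ ⟨x, hx, rfl⟩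
      exact hx
    exact closure_minimal hsub isClosed_Ici (hb.mem_closure_of_mem _ htail)
  · have hs : s ∈ map ((↑) : s → X) atTop :=
      mem_map.2 (univ_mem' fun x => x.2)
    exact (upperBounds_closure s ▸ hu) (hb.mem_closure_of_mem s hs)

theorem IsCompact.exists_isLUB_mem_of_directedOn {K s : Set X} (hK : IsCompact K) (hsK : s ⊆ K)
    (hs : s.Nonempty) (hdir : DirectedOn (· ≤ ·) s) : ∃ b ∈ K, IsLUB s b := by
  have := hs.to_subtype
  have := hdir.isDirectedOrder
  obtain ⟨b, hbK, hb⟩ := hK.exists_mapClusterPt (f := atTop) (u := ((↑) : s → X))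
    (tendsto_principal.2 (Eventually.of_forall fun x => hsK x.2))
  exact ⟨b, hbK, isLUB_of_mapClusterPt_atTop hb⟩

end

theorem compact_subset_chainComplete_general {X : Type*} [TopologicalSpace X]
    [PartialOrder X]
    (hnat : ∀ u : X, IsClosed {x : X | u ≤ x} ∧ IsClosed {x : X | x ≤ u})
    (D : Set X) (hcomp : IsCompact D) :
    ∀ C : Set X, C ⊆ D → C.Nonempty → IsChain (· ≤ ·) C →
      ∃ b ∈ D, IsLUB C b := by
  intro C hCD hCne hchain
  have : ClosedIciTopology X := ⟨fun u => (hnat u).1⟩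
  have : ClosedIicTopology X := ⟨fun u => (hnat u).2⟩
  exact hcomp.exists_isLUB_mem_of_directedOn hCD hCne hchain.directedOn

/-- Every nonempty compact subset of a Hausdorff topological space, partially ordered
with closed order intervals `[u)` and `(u]`, is chain-complete. -/
theorem compact_subset_chainComplete {X : Type*} [TopologicalSpace X] [T2Space X]
    [PartialOrder X]
    (hnat : ∀ u : X, IsClosed {x : X | u ≤ x} ∧ IsClosed {x : X | x ≤ u})
    (D : Set X) (hD : D.Nonempty) (hcomp : IsCompact D) :
    ∀ C : Set X, C ⊆ D → C.Nonempty → IsChain (· ≤ ·) C →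
      ∃ b ∈ D, IsLUB C b :=
  compact_subset_chainComplete_general hnat D hcomp
end

section
/- Let X be a reflexive real Banach space equipped with a partial order ≼ that is translation invariant (x ≼ y implies x + z ≼ y + z), invariant under multiplication by nonnegative scalars (x ≼ y implies αx ≼ αy for α ≥ 0), and whose positive cone {x : 0 ≼ x} is norm-closed. Then every nonempty norm-bounded, closed and convex subset D of X is chain-complete: every nonempty chain C ⊆ D has a least ≼-upper bound belonging to D. -/
/-!
Closed convex sets are weakly closed, and in a reflexive space bounded weakly closed sets are
weakly compact (Banach–Alaoglu, transported through the canonical embedding into the bidual).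
Given a chain `C ⊆ D`, the sets `D ∩ [c, ∞) ∩ lowerBounds (upperBounds C)` for `c ∈ C` are closed
and convex because the order is closed and compatible with the linear structure, contain `c`, and
are nested because `C` is a chain. Their intersection is therefore nonempty, and any of its points
is the least upper bound of `C`.
-/

open Set Function NormedSpace Bornology

theorem orderClosedTopology_of_isClosed_nonneg {E : Type*} [AddCommGroup E] [PartialOrder E]
    [IsOrderedAddMonoid E] [TopologicalSpace E] [ContinuousSub E]
    (hcone : IsClosed {x : E | 0 ≤ x}) : OrderClosedTopology E where
  isClosed_le' := by
    have : {p : E × E | p.1 ≤ p.2} = (fun p ↦ p.2 - p.1) ⁻¹' {x | 0 ≤ x} := by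
      ext; simp [sub_nonneg]
    rw [this]
    exact hcone.preimage (by fun_prop)

theorem lowerBounds_eq_biInter_Iic {α : Type*} [Preorder α] (s : Set α) :
    lowerBounds s = ⋂ u ∈ s, Iic u := by
  ext; simp [lowerBounds]

theorem isClosed_lowerBounds {α : Type*} [Preorder α] [TopologicalSpace α] [ClosedIicTopology α]
    (s : Set α) : IsClosed (lowerBounds s) := by
  rw [lowerBounds_eq_biInter_Iic]
  exact isClosed_biInter fun u _ ↦ isClosed_Iic

theorem convex_lowerBounds {𝕜 E : Type*} [Semiring 𝕜] [PartialOrder 𝕜] [AddCommMonoid E]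
    [PartialOrder E] [IsOrderedAddMonoid E] [Module 𝕜 E] [PosSMulMono 𝕜 E] (s : Set E) :
    Convex 𝕜 (lowerBounds s) := by
  rw [lowerBounds_eq_biInter_Iic]
  exact convex_iInter₂ fun u _ ↦ convex_Iic u

section Reflexive

theorem isCompact_closure_of_isBounded_of_reflexive {𝕜 X : Type*} [RCLike 𝕜]
    [NormedAddCommGroup X] [NormedSpace 𝕜 X]
    (hrefl : Surjective (inclusionInDoubleDual 𝕜 X)) {S : Set (WeakSpace 𝕜 X)}
    (hb : IsBounded (toWeakSpace 𝕜 X ⁻¹' S)) : IsCompact (closure S) := by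
  refine isCompact_closure_of_isBounded 𝕜 X S hb fun φ _ ↦ ?_
  obtain ⟨x, hx⟩ := hrefl (WeakDual.toStrongDual φ)
  exact ⟨toWeakSpace 𝕜 X x, DFunLike.ext _ _ fun f ↦ DFunLike.congr_fun hx f⟩

variable {X : Type*} [NormedAddCommGroup X] [NormedSpace ℝ X]
  (hrefl : Surjective (inclusionInDoubleDual ℝ X))
include hrefl

theorem IsClosed.isCompact_toWeakSpace_image_of_reflexive {S : Set X} (hc : IsClosed S)
    (hb : IsBounded S) (hconv : Convex ℝ S) : IsCompact (toWeakSpace ℝ X '' S) := by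
  have hweak : toWeakSpace ℝ X '' S = closure (toWeakSpace ℝ X '' S) := by
    rw [← hconv.toWeakSpace_closure ℝ, hc.closure_eq]
  rw [hweak]
  refine isCompact_closure_of_isBounded_of_reflexive hrefl ?_
  rwa [(toWeakSpace ℝ X).injective.preimage_image]

theorem nonempty_iInter_of_directed_of_reflexive {ι : Type*} [Nonempty ι] (t : ι → Set X)
    (htd : Directed (· ⊇ ·) t) (htn : ∀ i, (t i).Nonempty) (htb : ∀ i, IsBounded (t i))
    (htc : ∀ i, IsClosed (t i)) (htconv : ∀ i, Convex ℝ (t i)) : (⋂ i, t i).Nonempty := by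
  have hcompact i := (htc i).isCompact_toWeakSpace_image_of_reflexive hrefl (htb i) (htconv i)
  have := IsCompact.nonempty_iInter_of_directed_nonempty_isCompact_isClosed
    (fun i ↦ toWeakSpace ℝ X '' t i)
    (htd.mono_comp (g := image (toWeakSpace ℝ X)) _ fun _ _ ↦ image_mono)
    (fun i ↦ (htn i).image _) hcompact fun i ↦ (hcompact i).isClosed
  rw [← image_iInter (toWeakSpace ℝ X).bijective] at this
  exact this.of_image

end Reflexive

theorem IsChain.exists_isLUB_of_reflexive {X : Type*} [NormedAddCommGroup X] [NormedSpace ℝ X]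
    [PartialOrder X] [IsOrderedAddMonoid X] [PosSMulMono ℝ X] [OrderClosedTopology X]
    (hrefl : Surjective (inclusionInDoubleDual ℝ X)) {D C : Set X} (hDb : IsBounded D)
    (hDc : IsClosed D) (hDconv : Convex ℝ D) (hCD : C ⊆ D) (hCne : C.Nonempty)
    (hchain : IsChain (· ≤ ·) C) : ∃ b ∈ D, IsLUB C b := by
  have : Nonempty C := hCne.to_subtype
  let t (c : C) : Set X := D ∩ Ici (c : X) ∩ lowerBounds (upperBounds C)
  have ht_anti {c₁ c₂ : C} (h : (c₁ : X) ≤ c₂) : t c₂ ⊆ t c₁ :=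
    fun _ ⟨⟨hxD, hx⟩, hxl⟩ ↦ ⟨⟨hxD, h.trans hx⟩, hxl⟩
  have htd : Directed (· ⊇ ·) t := fun c₁ c₂ ↦ by
    rcases hchain.total c₁.2 c₂.2 with h | h
    · exact ⟨c₂, ht_anti h, subset_rfl⟩
    · exact ⟨c₁, subset_rfl, ht_anti h⟩
  obtain ⟨b, hb⟩ := nonempty_iInter_of_directed_of_reflexive hrefl t htd
    (fun c ↦ ⟨c, ⟨hCD c.2, le_rfl⟩, subset_lowerBounds_upperBounds C c.2⟩)
    (fun _ ↦ hDb.subset (inter_subset_left.trans inter_subset_left))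
    (fun _ ↦ (hDc.inter isClosed_Ici).inter (isClosed_lowerBounds _))
    (fun _ ↦ (hDconv.inter (convex_Ici _)).inter (convex_lowerBounds _))
  have hbt (c : C) : b ∈ t c := mem_iInter.1 hb c
  obtain ⟨c₀, hc₀⟩ := hCne
  exact ⟨b, (hbt ⟨c₀, hc₀⟩).1.1, fun c hc ↦ (hbt ⟨c, hc⟩).1.2, (hbt ⟨c₀, hc₀⟩).2⟩

theorem chainComplete_of_reflexive_general {X : Type*} [NormedAddCommGroup X] [NormedSpace ℝ X]
    [PartialOrder X]
    (hadd : ∀ x y z : X, x ≤ y → x + z ≤ y + z)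
    (hsmul : ∀ α : ℝ, 0 ≤ α → ∀ x y : X, x ≤ y → α • x ≤ α • y)
    (hcone : IsClosed {x : X | 0 ≤ x})
    (hrefl : Function.Surjective (NormedSpace.inclusionInDoubleDual ℝ X))
    (D : Set X) (hbdd : Bornology.IsBounded D)
    (hclosed : IsClosed D) (hconv : Convex ℝ D) :
    ∀ C : Set X, C ⊆ D → C.Nonempty → IsChain (· ≤ ·) C →
      ∃ b ∈ D, IsLUB C b := by
  have : IsOrderedAddMonoid X := { add_le_add_left := fun x y h z ↦ hadd x y z h }
  have : PosSMulMono ℝ X := ⟨fun α hα x y h ↦ hsmul α hα x y h⟩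
  have : OrderClosedTopology X := orderClosedTopology_of_isClosed_nonneg hcone
  exact fun C hCD hCne hchain ↦
    hchain.exists_isLUB_of_reflexive hrefl hbdd hclosed hconv hCD hCne

/-- Every nonempty norm-bounded closed convex subset of a partially ordered
reflexive Banach space is chain-complete. -/
theorem chainComplete_of_reflexive {X : Type*} [NormedAddCommGroup X] [NormedSpace ℝ X]
    [CompleteSpace X] [PartialOrder X]
    (hadd : ∀ x y z : X, x ≤ y → x + z ≤ y + z)
    (hsmul : ∀ α : ℝ, 0 ≤ α → ∀ x y : X, x ≤ y → α • x ≤ α • y)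
    (hcone : IsClosed {x : X | 0 ≤ x})
    (hrefl : Function.Surjective (NormedSpace.inclusionInDoubleDual ℝ X))
    (D : Set X) (hD : D.Nonempty) (hbdd : Bornology.IsBounded D)
    (hclosed : IsClosed D) (hconv : Convex ℝ D) :
    ∀ C : Set X, C ⊆ D → C.Nonempty → IsChain (· ≤ ·) C →
      ∃ b ∈ D, IsLUB C b :=
  chainComplete_of_reflexive_general hadd hsmul hcone hrefl D hbdd hclosed hconv
end

section
/- For n ≥ 1 set λ_n = 4^{−n} and define y_n : [−1,1] → ℝ by y_n(t) = t + 1 for t ∈ [−1, −λ_n], y_n(t) = −t²/(2λ_n) + 1 − λ_n/2 for t ∈ (−λ_n, 0], and y_n(t) = 1 − λ_n/2 for t ∈ (0, 1]. Then each y_n is continuously differentiable on [−1,1] with sup_{[−1,1]}|y_n| + sup_{[−1,1]}|y_n'| = 2 − λ_n/2 ≤ 2, and y_n(t) ≤ y_{n+1}(t) and y_n'(t) ≤ y_{n+1}'(t) for all t ∈ [−1,1]; but there exists no function w that is continuously differentiable on [−1,1] with sup_{[−1,1]}|w| + sup_{[−1,1]}|w'| ≤ 2 and satisfying w(t) ≥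 y_n(t) and w'(t) ≥ y_n'(t) for all t ∈ [−1,1] and all n ≥ 1. -/
open scoped Classical

/-- `λₙ = 4⁻ⁿ`. -/
noncomputable def lam7 (n : ℕ) : ℝ := (1 / 4 : ℝ) ^ n

/-- The function `yₙ` : `t + 1` on `[-1, -λₙ]`, `-t²/(2λₙ) + 1 - λₙ/2` on `(-λₙ, 0]`,
and `1 - λₙ/2` on `(0, 1]`. -/
noncomputable def y7 (n : ℕ) (t : ℝ) : ℝ :=
  if t ≤ -(lam7 n) then t + 1
  else if t ≤ 0 then -t ^ 2 / (2 * lam7 n) + 1 - lam7 n / 2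
  else 1 - lam7 n / 2

/-- The derivative of `yₙ` : `1` on `[-1, -λₙ]`, `-t/λₙ` on `(-λₙ, 0]`, `0` on `(0, 1]`. -/
noncomputable def yd7 (n : ℕ) (t : ℝ) : ℝ :=
  if t ≤ -(lam7 n) then 1
  else if t ≤ 0 then -t / lam7 n
  else 0

/-!
On `[0,1]` the `yₙ` increase to `1`, and on `[-1,0)` the derivatives `yₙ'` are eventually `1`.
An upper bound `w` would therefore satisfy `w ≥ 1` on `[0,1]` and, by continuity of `w'`,
`w'(0) ≥ 1`. Then `sup |w'| ≥ 1` forces `sup |w| ≤ 1`, so `w ≡ 1` on `[0,1]` and its one-sided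
derivative `w'(0)` vanishes, a contradiction.
-/

open Filter Set Topology

theorem hasDerivAt_ite_le {F : Type*} [NormedAddCommGroup F] [NormedSpace ℝ F]
    {g h g' h' : ℝ → F} {a : ℝ} (hg : ∀ t, HasDerivAt g (g' t) t)
    (hh : ∀ t, HasDerivAt h (h' t) t) (hval : g a = h a) (hder : g' a = h' a) (t : ℝ) :
    HasDerivAt (fun s => if s ≤ a then g s else h s) (if t ≤ a then g' t else h' t) t := by
  rcases lt_trichotomy t a with hta | rfl | hat
  · rw [if_pos hta.le]
    exact (hg t).congr_of_eventuallyEq ((eventually_lt_nhds hta).mono fun s hs => if_pos hs.le)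
  · rw [if_pos le_rfl]
    have hleft : HasDerivWithinAt (fun s => if s ≤ t then g s else h s) (g' t) (Iic t) t :=
      (hg t).hasDerivWithinAt.congr (fun s hs => if_pos hs) (if_pos le_rfl)
    have hright : HasDerivWithinAt (fun s => if s ≤ t then g s else h s) (g' t) (Ici t) t := by
      refine hder ▸ (hh t).hasDerivWithinAt.congr (fun s hs => ?_) (by simp [hval])
      rcases (mem_Ici.1 hs).eq_or_lt with rfl | hlt
      · simp [hval]
      · exact if_neg hlt.not_ge
    simpa only [Iic_union_Ici, hasDerivWithinAt_univ] using hleft.union hright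
  · rw [if_neg hat.not_ge]
    exact (hh t).congr_of_eventuallyEq ((eventually_gt_nhds hat).mono fun s hs => if_neg hs.not_ge)

theorem IsMaxOn.ciSup_eq {α β : Type*} [ConditionallyCompleteLattice β] {f : α → β}
    {s : Set α} {x : α} (h : IsMaxOn f s x) (hx : x ∈ s) : ⨆ y : s, f y = f x :=
  IsGreatest.csSup_eq
    ⟨⟨⟨x, hx⟩, rfl⟩, by rintro _ ⟨y, rfl⟩; exact isMaxOn_iff.1 h y y.2⟩

theorem ContinuousOn.le_ciSup_of_isCompact {α : Type*} [TopologicalSpace α] {f : α → ℝ}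
    {s : Set α} {x : α} (hf : ContinuousOn f s) (hs : IsCompact s) (hx : x ∈ s) :
    f x ≤ ⨆ y : s, f y :=
  le_ciSup (by rw [← image_eq_range]; exact hs.bddAbove_image hf) (⟨x, hx⟩ : s)

theorem two_lt_iSup_abs_add_iSup_abs_deriv {w w' : ℝ → ℝ}
    (hderiv : ∀ t ∈ Icc (-1 : ℝ) 1, HasDerivWithinAt w (w' t) (Icc (-1) 1) t)
    (hcont : ContinuousOn w' (Icc (-1) 1))
    (hw : ∀ t ∈ Icc (0 : ℝ) 1, 1 ≤ w t) (hw' : ∀ t ∈ Ico (-1 : ℝ) 0, 1 ≤ w' t) :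
    2 < (⨆ t : Icc (-1 : ℝ) 1, |w t|) + (⨆ t : Icc (-1 : ℝ) 1, |w' t|) := by
  by_contra! hsum
  have h0 : (0 : ℝ) ∈ Icc (-1) 1 := by norm_num
  have hw'0 : 1 ≤ w' 0 :=
    ContinuousWithinAt.closure_le (f := fun _ => 1) (by rw [closure_Ico (by norm_num)]; norm_num)
      continuousWithinAt_const
      ((hcont 0 h0).mono (Ico_subset_Icc_self.trans (Icc_subset_Icc le_rfl zero_le_one))) hw'
  have hw_le : ∀ t ∈ Icc (-1 : ℝ) 1, w t ≤ 1 := fun t ht => by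
    have hwC : ContinuousOn w (Icc (-1) 1) := fun t ht => (hderiv t ht).continuousWithinAt
    have h1 := hwC.abs.le_ciSup_of_isCompact isCompact_Icc ht
    have h2 := hcont.abs.le_ciSup_of_isCompact isCompact_Icc h0
    linarith [le_abs_self (w t), le_abs_self (w' 0)]
  have hsub : Icc (0 : ℝ) 1 ⊆ Icc (-1) 1 := Icc_subset_Icc (by norm_num) le_rfl
  have hw_eq : EqOn w (fun _ => 1) (Icc 0 1) := fun t ht => (hw_le t (hsub ht)).antisymm (hw t ht)
  have hw'0_eq : w' 0 = 0 :=
    (uniqueDiffOn_Icc_zero_one 0 ⟨le_rfl, zero_le_one⟩).eq_deriv _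
      ((hderiv 0 h0).mono hsub)
      ((hasDerivWithinAt_const 0 _ 1).congr hw_eq (hw_eq ⟨le_rfl, zero_le_one⟩))
  linarith

theorem lam7_pos (n : ℕ) : 0 < lam7 n := pow_pos (by norm_num) n

theorem lam7_le_one (n : ℕ) : lam7 n ≤ 1 := pow_le_one₀ (by norm_num) (by norm_num)

theorem lam7_antitone : Antitone lam7 :=
  fun _ _ h => pow_le_pow_of_le_one (by norm_num) (by norm_num) h

theorem tendsto_lam7_atTop : Tendsto lam7 atTop (𝓝 0) :=
  tendsto_pow_atTop_nhds_zero_of_lt_one (by norm_num) (by norm_num)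

theorem hasDerivAt_y7 (n : ℕ) (t : ℝ) : HasDerivAt (y7 n) (yd7 n t) t := by
  have hl := (lam7_pos n).ne'
  have hmid (t : ℝ) :
      HasDerivAt (fun s => -s ^ 2 / (2 * lam7 n) + 1 - lam7 n / 2) (-t / lam7 n) t := by
    refine ((((hasDerivAt_pow 2 t).neg.div_const _).add_const 1).sub_const _).congr_deriv ?_
    field_simp
    ring
  have hinner := hasDerivAt_ite_le hmid (fun _ => hasDerivAt_const _ (1 - lam7 n / 2)) (a := 0)
    (by ring) (by simp)
  exact hasDerivAt_ite_le (fun t => (hasDerivAt_id' t).add_const 1) hinner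
    (by rw [if_pos (neg_nonpos.2 (lam7_pos n).le)]; field_simp; ring)
    (by simp [hl, (lam7_pos n).le]) t

theorem yd7_eq_min_max (n : ℕ) (t : ℝ) : yd7 n t = min 1 (max 0 (-t / lam7 n)) := by
  have hl := lam7_pos n
  unfold yd7
  split_ifs with h₁ h₂
  · rw [max_eq_right (div_nonneg (by linarith) hl.le),
      min_eq_left ((le_div_iff₀ hl).2 (by linarith))]
  · rw [max_eq_right (div_nonneg (by linarith) hl.le),
      min_eq_right ((div_le_one hl).2 (by linarith))]
  · rw [max_eq_left (div_nonpos_of_nonpos_of_nonneg (by linarith) hl.le), min_eq_right zero_le_one]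

theorem continuous_yd7 (n : ℕ) : Continuous (yd7 n) := by
  rw [funext (yd7_eq_min_max n)]
  fun_prop

theorem yd7_of_le {n : ℕ} {t : ℝ} (ht : t ≤ -lam7 n) : yd7 n t = 1 := if_pos ht

theorem abs_yd7_le_one (n : ℕ) (t : ℝ) : |yd7 n t| ≤ 1 := by
  rw [yd7_eq_min_max, abs_of_nonneg (le_min zero_le_one (le_max_left _ _))]
  exact min_le_left _ _

theorem yd7_le_yd7 {m n : ℕ} (hmn : m ≤ n) (t : ℝ) : yd7 m t ≤ yd7 n t := by
  rw [yd7_eq_min_max, yd7_eq_min_max]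
  refine min_le_min le_rfl (max_le (le_max_left _ _) ?_)
  rcases le_or_gt t 0 with ht | ht
  · exact (div_le_div_of_nonneg_left (neg_nonneg.2 ht) (lam7_pos n) (lam7_antitone hmn)).trans
      (le_max_right _ _)
  · exact (div_nonpos_of_nonpos_of_nonneg (by linarith) (lam7_pos m).le).trans (le_max_left _ _)

theorem y7_of_nonneg (n : ℕ) {t : ℝ} (ht : 0 ≤ t) : y7 n t = 1 - lam7 n / 2 := by
  have hl := lam7_pos n
  rcases ht.eq_or_lt with rfl | ht
  · simp [y7, hl]
  · simp [y7, ht.not_ge, (by linarith : ¬ t ≤ -lam7 n)]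

theorem y7_le (n : ℕ) (t : ℝ) : y7 n t ≤ 1 - lam7 n / 2 := by
  have hl := lam7_pos n
  unfold y7
  split_ifs
  · linarith
  · have : 0 ≤ t ^ 2 / (2 * lam7 n) := by positivity
    linarith [neg_div (2 * lam7 n) (t ^ 2)]
  · rfl

theorem y7_nonneg (n : ℕ) {t : ℝ} (ht : -1 ≤ t) : 0 ≤ y7 n t := by
  have hl := lam7_pos n
  have hl₁ := lam7_le_one n
  unfold y7
  split_ifs with h₁ h₂
  · linarith
  · have : t ^ 2 / (2 * lam7 n) ≤ lam7 n / 2 := by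
      rw [div_le_div_iff₀ (by positivity) two_pos]
      nlinarith
    linarith [neg_div (2 * lam7 n) (t ^ 2)]
  · linarith

theorem y7_le_y7 {m n : ℕ} (hmn : m ≤ n) (t : ℝ) : y7 m t ≤ y7 n t := by
  have hμ : 0 < lam7 n := lam7_pos n
  have hμl : lam7 n ≤ lam7 m := lam7_antitone hmn
  have hl : 0 < lam7 m := hμ.trans_le hμl
  simp only [y7]
  set l := lam7 m
  set μ := lam7 n
  rcases le_or_gt t (-l) with h₁ | h₁
  · rw [if_pos h₁, if_pos (h₁.trans (neg_le_neg hμl))]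
  rcases le_or_gt t 0 with h₂ | h₂
  · rw [if_neg h₁.not_ge, if_pos h₂, if_pos h₂]
    split_ifs with h₃
    · have : 0 ≤ (t + l) ^ 2 / (2 * l) := by positivity
      have : -t ^ 2 / (2 * l) + 1 - l / 2 = t + 1 - (t + l) ^ 2 / (2 * l) := by
        field_simp
        ring
      linarith
    · have : 0 ≤ (l - μ) * (l * μ - t ^ 2) / (2 * l * μ) := by
        apply div_nonneg _ (by positivity)
        refine mul_nonneg (by linarith) ?_
        nlinarith
      have : -t ^ 2 / (2 * μ) + 1 - μ / 2 =
          -t ^ 2 / (2 * l) + 1 - l / 2 + (l - μ) * (l * μ - t ^ 2) / (2 * l * μ) := by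
        field_simp
        ring
      linarith
  · rw [if_neg h₁.not_ge, if_neg h₂.not_ge, if_neg (by linarith), if_neg h₂.not_ge]
    linarith

theorem iSup_abs_y7 (n : ℕ) : ⨆ t : Icc (-1 : ℝ) 1, |y7 n t| = 1 - lam7 n / 2 := by
  have habs {t : ℝ} (ht : t ∈ Icc (-1 : ℝ) 1) : |y7 n t| = y7 n t :=
    abs_of_nonneg (y7_nonneg n ht.1)
  have h₁ : (1 : ℝ) ∈ Icc (-1) 1 := right_mem_Icc.2 (by norm_num)
  have hmax : IsMaxOn (fun t => |y7 n t|) (Icc (-1) 1) 1 := isMaxOn_iff.2 fun t ht => by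
    rw [habs ht, habs h₁, y7_of_nonneg n zero_le_one]
    exact y7_le n t
  rw [hmax.ciSup_eq h₁, habs h₁, y7_of_nonneg n zero_le_one]

theorem iSup_abs_yd7 (n : ℕ) : ⨆ t : Icc (-1 : ℝ) 1, |yd7 n t| = 1 := by
  have h₁ : |yd7 n (-1)| = 1 := by rw [yd7_of_le (neg_le_neg (lam7_le_one n)), abs_one]
  have hmax : IsMaxOn (fun t => |yd7 n t|) (Icc (-1) 1) (-1) :=
    isMaxOn_iff.2 fun t _ => (abs_yd7_le_one n t).trans h₁.ge
  rw [hmax.ciSup_eq (left_mem_Icc.2 (by norm_num)), h₁]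

theorem one_le_of_forall_y7_le {t x : ℝ} (ht : 0 ≤ t) (h : ∀ n : ℕ, 1 ≤ n → y7 n t ≤ x) :
    1 ≤ x := by
  have hlim : Tendsto (fun n => y7 n t) atTop (𝓝 1) := by
    simp only [y7_of_nonneg _ ht]
    simpa using tendsto_const_nhds.sub (tendsto_lam7_atTop.div_const 2)
  exact le_of_tendsto hlim (eventually_atTop.2 ⟨1, h⟩)

theorem one_le_of_forall_yd7_le {t x : ℝ} (ht : t < 0) (h : ∀ n : ℕ, 1 ≤ n → yd7 n t ≤ x) :
    1 ≤ x := by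
  obtain ⟨n, hn, hlt⟩ :=
    ((eventually_ge_atTop 1).and (tendsto_lam7_atTop.eventually_lt_const (neg_pos.2 ht))).exists
  calc 1 = yd7 n t := (yd7_of_le (by linarith)).symm
    _ ≤ x := h n hn

/-- For `λₙ = 4⁻ⁿ`, the piecewise functions `yₙ` are continuously differentiable on
`[-1,1]` with derivative `yd7 n`, have C¹-norm `sup |yₙ| + sup |yₙ'| = 2 - λₙ/2 ≤ 2`,
form an increasing chain (`yₙ ≤ yₙ₊₁` and `yₙ' ≤ yₙ₊₁'` pointwise on `[-1,1]`),
but there is no C¹ function `w` on `[-1,1]` with `sup |w| + sup |w'| ≤ 2` dominating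
every `yₙ` together with its derivative. -/
theorem y7_no_upper_bound_in_ball :
    (∀ n : ℕ, 1 ≤ n → ∀ t ∈ Set.Icc (-1 : ℝ) 1, HasDerivAt (y7 n) (yd7 n t) t) ∧
    (∀ n : ℕ, 1 ≤ n → ContinuousOn (yd7 n) (Set.Icc (-1 : ℝ) 1)) ∧
    (∀ n : ℕ, 1 ≤ n →
      (⨆ t : Set.Icc (-1 : ℝ) 1, |y7 n t.1|) + (⨆ t : Set.Icc (-1 : ℝ) 1, |yd7 n t.1|)
        = 2 - lam7 n / 2 ∧
      (⨆ t : Set.Icc (-1 : ℝ) 1, |y7 n t.1|) + (⨆ t : Set.Icc (-1 : ℝ) 1, |yd7 n t.1|) ≤ 2) ∧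
    (∀ n : ℕ, 1 ≤ n → ∀ t ∈ Set.Icc (-1 : ℝ) 1,
      y7 n t ≤ y7 (n + 1) t ∧ yd7 n t ≤ yd7 (n + 1) t) ∧
    ¬ ∃ w w' : ℝ → ℝ,
        (∀ t ∈ Set.Icc (-1 : ℝ) 1, HasDerivWithinAt w (w' t) (Set.Icc (-1 : ℝ) 1) t) ∧
        ContinuousOn w' (Set.Icc (-1 : ℝ) 1) ∧
        (⨆ t : Set.Icc (-1 : ℝ) 1, |w t.1|) + (⨆ t : Set.Icc (-1 : ℝ) 1, |w' t.1|) ≤ 2 ∧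
        (∀ n : ℕ, 1 ≤ n → ∀ t ∈ Set.Icc (-1 : ℝ) 1, y7 n t ≤ w t ∧ yd7 n t ≤ w' t) := by
  refine ⟨fun n _ t _ => hasDerivAt_y7 n t, fun n _ => (continuous_yd7 n).continuousOn,
    fun n _ => ?_, fun n _ t _ => ⟨y7_le_y7 n.le_succ t, yd7_le_yd7 n.le_succ t⟩, ?_⟩
  · rw [iSup_abs_y7, iSup_abs_yd7]
    exact ⟨by ring, by linarith [lam7_pos n]⟩
  · rintro ⟨w, w', hderiv, hcont, hsum, hdom⟩
    refine (two_lt_iSup_abs_add_iSup_abs_deriv hderiv hcont (fun t ht => ?_)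
      (fun t ht => ?_)).not_ge hsum
    · exact one_le_of_forall_y7_le ht.1 fun n hn => (hdom n hn t ⟨by linarith [ht.1], ht.2⟩).1
    · exact one_le_of_forall_yd7_le ht.2 fun n hn => (hdom n hn t ⟨ht.1, by linarith [ht.2]⟩).2
end

section
/- Let X be a real Banach space with a partial order ≼ that is translation invariant, invariant under multiplication by nonnegative scalars, has norm-closed positive cone {x : 0 ≼ x}, and is regular (every ≼-increasing sequence that has a ≼-upper bound is norm-convergent). Then every nonempty norm-closed inductive subset D of X is chain-complete: every nonempty chain C ⊆ D has a least ≼-upper bound belonging to D. -/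
/-!
A chain `C`, ordered by `≼`, is a directed index set, and its inclusion into `X` is a monotone
net, bounded above since `D` is inductive. Regularity forces this net to be Cauchy: otherwise
one could climb the chain in steps of norm at least some fixed `ε`, producing an increasing
bounded sequence that does not converge. By completeness the net has a limit `l`, which lies in
the closed set `D`; as the closed positive cone makes `≼` a closed relation, the limit of a
monotone net is its least upper bound.
-/

open Filter Topology

def IsRegularOrder (X : Type*) [Preorder X] [TopologicalSpace X] : Prop :=
  ∀ x : ℕ → X, (∀ n, x n ≤ x (n + 1)) → (∃ b : X, ∀ n, x n ≤ b) →
    ∃ l : X, Tendsto x atTop (𝓝 l)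

theorem orderClosedTopology_of_isClosed_nonneg_s10 {X : Type*} [AddCommGroup X] [TopologicalSpace X]
    [ContinuousSub X] [Preorder X] (hadd : ∀ x y z : X, x ≤ y → x + z ≤ y + z)
    (hcone : IsClosed {x : X | 0 ≤ x}) : OrderClosedTopology X := by
  have hle : {p : X × X | p.1 ≤ p.2} = (fun p => p.2 - p.1) ⁻¹' {x | 0 ≤ x} := by
    ext p
    constructor
    · intro h
      simpa [sub_eq_add_neg] using hadd _ _ (-p.1) h
    · intro h
      simpa using hadd _ _ p.1 h
  exact ⟨hle ▸ hcone.preimage (continuous_snd.sub continuous_fst)⟩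

theorem IsRegularOrder.cauchySeq_of_monotone {X : Type*} [PseudoMetricSpace X] [Preorder X]
    (hreg : IsRegularOrder X) {ι : Type*} [Nonempty ι] [SemilatticeSup ι] {f : ι → X}
    (hf : Monotone f) (hbdd : BddAbove (Set.range f)) : CauchySeq f := by
  rw [Metric.cauchySeq_iff']
  by_contra! hfar
  obtain ⟨ε, hε, hfar⟩ := hfar
  choose next hnext_ge hnext_far using hfar
  obtain ⟨i⟩ := ‹Nonempty ι›
  set s : ℕ → ι := fun k => next^[k] i
  have hs : ∀ k, s (k + 1) = next (s k) := fun k => Function.iterate_succ_apply' next k i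
  obtain ⟨b, hb⟩ := hbdd
  obtain ⟨l, hl⟩ := hreg (f ∘ s) (fun k => by simpa [hs] using hf (hnext_ge (s k)))
    ⟨b, fun k => hb ⟨s k, rfl⟩⟩
  obtain ⟨K, hK⟩ := Metric.cauchySeq_iff'.1 hl.cauchySeq ε hε
  exact (hnext_far (s K)).not_gt (by simpa [hs] using hK (K + 1) K.le_succ)

theorem chainComplete_of_regular_general {X : Type*} [NormedAddCommGroup X]
    [CompleteSpace X] [PartialOrder X]
    (hadd : ∀ x y z : X, x ≤ y → x + z ≤ y + z)
    (hcone : IsClosed {x : X | 0 ≤ x})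
    (hreg : ∀ x : ℕ → X, (∀ n, x n ≤ x (n + 1)) → (∃ b : X, ∀ n, x n ≤ b) →
      ∃ l : X, Filter.Tendsto x Filter.atTop (nhds l))
    (D : Set X) (hclosed : IsClosed D)
    (hind : ∀ C : Set X, C ⊆ D → C.Nonempty → IsChain (· ≤ ·) C →
      ∃ b ∈ D, ∀ c ∈ C, c ≤ b) :
    ∀ C : Set X, C ⊆ D → C.Nonempty → IsChain (· ≤ ·) C → ∃ b ∈ D, IsLUB C b := by
  classical
  intro C hCD hCne hchain
  let _ := hchain.linearOrder
  have : Nonempty C := hCne.to_subtype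
  have := orderClosedTopology_of_isClosed_nonneg_s10 hadd hcone
  have hmono : Monotone ((↑) : C → X) := fun _ _ h => h
  obtain ⟨b, -, hb⟩ := hind C hCD hCne hchain
  have hbdd : BddAbove (Set.range ((↑) : C → X)) := ⟨b, by rintro _ ⟨c, rfl⟩; exact hb c c.2⟩
  obtain ⟨l, hl⟩ :=
    cauchySeq_tendsto_of_complete (IsRegularOrder.cauchySeq_of_monotone hreg hmono hbdd)
  refine ⟨l, hclosed.mem_of_tendsto hl (Eventually.of_forall fun c => hCD c.2), ?_⟩
  simpa using isLUB_of_tendsto_atTop hmono hl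

/-- Every nonempty norm-closed inductive subset of a regular partially ordered Banach
space is chain-complete. -/
theorem chainComplete_of_regular {X : Type*} [NormedAddCommGroup X] [NormedSpace ℝ X]
    [CompleteSpace X] [PartialOrder X]
    (hadd : ∀ x y z : X, x ≤ y → x + z ≤ y + z)
    (hsmul : ∀ α : ℝ, 0 ≤ α → ∀ x y : X, x ≤ y → α • x ≤ α • y)
    (hcone : IsClosed {x : X | 0 ≤ x})
    (hreg : ∀ x : ℕ → X, (∀ n, x n ≤ x (n + 1)) → (∃ b : X, ∀ n, x n ≤ b) →
      ∃ l : X, Filter.Tendsto x Filter.atTop (nhds l))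
    (D : Set X) (hD : D.Nonempty) (hclosed : IsClosed D)
    (hind : ∀ C : Set X, C ⊆ D → C.Nonempty → IsChain (· ≤ ·) C →
      ∃ b ∈ D, ∀ c ∈ C, c ≤ b) :
    ∀ C : Set X, C ⊆ D → C.Nonempty → IsChain (· ≤ ·) C → ∃ b ∈ D, IsLUB C b :=
  chainComplete_of_regular_general hadd hcone hreg D hclosed hind
end

section
/- Let X be a real Banach space with a partial order ≼ that is translation invariant, invariant under multiplication by nonnegative scalars, has norm-closed positive cone, and is regular (every ≼-increasing sequence with a ≼-upper bound is norm-convergent). Then every nonempty norm-closed bi-inductive subset D of X is bi-chain-complete: every nonempty chain C ⊆ D has both a least ≼-upper bound and a greatest ≼-lower bound belonging to D. -/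
/-!
Let `C` be a nonempty chain with an upper bound. Starting anywhere in `C`, pick greedily an
increasing sequence `xₙ` in `C` such that `xₙ₊₁` is, up to a factor two, as far from `xₙ` as any
element of `C` above `xₙ` (distances truncated at `1`). By regularity `xₙ` converges to some `l`,
which lies in the closure of `C`, hence in `D`. Every `c ∈ C` is either below some `xₙ`, hence
below `l`, or above all of them; in the latter case the greedy choice and `dist xₙ₊₁ xₙ → 0` force
`xₙ → c`, so `c ≤ l` again. Closedness of the cone makes `l` least among the upper bounds. Greatest
lower bounds follow by applying this to the reversed order, which is regular because `x ↦ -x`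
exchanges increasing and decreasing sequences.
-/

open Filter Set Topology

lemma exists_mem_forall_le_two_mul {S : Set ℝ} (hne : S.Nonempty) (hbdd : BddAbove S)
    (hnonneg : ∀ s ∈ S, 0 ≤ s) : ∃ t ∈ S, ∀ s ∈ S, s ≤ 2 * t := by
  rcases le_or_gt (sSup S) 0 with hsup | hsup
  · obtain ⟨t, ht⟩ := hne
    exact ⟨t, ht, fun s hs => by linarith [le_csSup hbdd hs, hnonneg t ht]⟩
  · obtain ⟨t, ht, hlt⟩ := exists_lt_of_lt_csSup hne (half_lt_self hsup)
    exact ⟨t, ht, fun s hs => by linarith [le_csSup hbdd hs]⟩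

section Greedy

variable {α : Type*} [PseudoMetricSpace α] [Preorder α] {C : Set α}

def IsAlmostFarthestSeq (C : Set α) (x : ℕ → α) : Prop :=
  ∀ n, ∀ c ∈ C, x n ≤ c → min 1 (dist c (x n)) ≤ 2 * min 1 (dist (x (n + 1)) (x n))

lemma exists_almost_farthest_above {x : α} (hx : x ∈ C) :
    ∃ y ∈ C, x ≤ y ∧ ∀ c ∈ C, x ≤ c → min 1 (dist c x) ≤ 2 * min 1 (dist y x) := by
  obtain ⟨_, ⟨y, ⟨hyC, hxy⟩, rfl⟩, hy⟩ :=
    exists_mem_forall_le_two_mul (S := (fun c => min 1 (dist c x)) '' {c ∈ C | x ≤ c})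
      ⟨_, mem_image_of_mem _ ⟨hx, le_rfl⟩⟩
      ⟨1, forall_mem_image.2 fun _ _ => min_le_left _ _⟩
      (forall_mem_image.2 fun _ _ => le_min zero_le_one dist_nonneg)
  exact ⟨y, hyC, hxy, fun c hc hxc => hy _ (mem_image_of_mem _ ⟨hc, hxc⟩)⟩

lemma exists_isAlmostFarthestSeq (hne : C.Nonempty) :
    ∃ x : ℕ → α, (∀ n, x n ∈ C) ∧ Monotone x ∧ IsAlmostFarthestSeq C x := by
  choose! g hgC hle hfar using fun x (hx : x ∈ C) => exists_almost_farthest_above hx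
  obtain ⟨c₀, hc₀⟩ := hne
  have hsucc : ∀ n, g^[n + 1] c₀ = g (g^[n] c₀) := fun n => Function.iterate_succ_apply' g n c₀
  have hmem : ∀ n, g^[n] c₀ ∈ C := by
    intro n
    induction n with
    | zero => exact hc₀
    | succ n ih => rw [hsucc]; exact hgC _ ih
  refine ⟨fun n => g^[n] c₀, hmem, monotone_nat_of_le_succ fun n => ?_, fun n => ?_⟩
  · rw [hsucc]; exact hle _ (hmem n)
  · simp only [hsucc]; exact hfar _ (hmem n)

variable [OrderClosedTopology α]

lemma IsAlmostFarthestSeq.isLUB_of_tendsto {x : ℕ → α} (hfar : IsAlmostFarthestSeq C x)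
    (hC : IsChain (· ≤ ·) C) (hxC : ∀ n, x n ∈ C) (hx : Monotone x) {l : α} (hl : Tendsto x atTop (𝓝 l)) : IsLUB C l := by
  have hxl : ∀ n, x n ≤ l := hx.ge_of_tendsto hl
  refine ⟨fun c hc => ?_, fun u hu => (isLUB_of_tendsto_atTop hx hl).2 ?_⟩
  · by_cases hbelow : ∃ n, c ≤ x n
    · obtain ⟨n, hn⟩ := hbelow
      exact hn.trans (hxl n)
    have habove : ∀ n, x n ≤ c := fun n =>
      (hC.total (hxC n) hc).resolve_right fun h => hbelow ⟨n, h⟩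
    have hstep : Tendsto (fun n => dist (x (n + 1)) (x n)) atTop (𝓝 0) := by
      simpa using ((tendsto_add_atTop_iff_nat 1).2 hl).dist hl
    -- once the steps are shorter than `1/2`, the truncation at `1` is inactive
    have hclose : ∀ᶠ n in atTop, dist c (x n) ≤ 2 * dist (x (n + 1)) (x n) := by
      filter_upwards [hstep.eventually (gt_mem_nhds one_half_pos)] with n hn
      have hfar' := (hfar n c hc (habove n)).trans
        (mul_le_mul_of_nonneg_left (min_le_right _ _) zero_le_two)
      have hlt : dist c (x n) < 1 :=
        (min_lt_iff.1 (by linarith : min 1 (dist c (x n)) < 1)).resolve_left (lt_irrefl 1)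
      rwa [min_eq_right hlt.le] at hfar'
    have hxc : Tendsto x atTop (𝓝 c) := by
      rw [tendsto_iff_dist_tendsto_zero]
      refine squeeze_zero' (Eventually.of_forall fun _ => dist_nonneg) ?_
        (by simpa using hstep.const_mul 2)
      simpa only [dist_comm] using hclose
    exact le_of_tendsto' hxc hxl
  · rintro _ ⟨n, rfl⟩
    exact hu (hxC n)

theorem IsChain.exists_isLUB_mem_closure
    (hreg : ∀ x : ℕ → α, Monotone x → BddAbove (range x) → ∃ l, Tendsto x atTop (𝓝 l))
    (hC : IsChain (· ≤ ·) C) (hne : C.Nonempty) (hbdd : BddAbove C) :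
    ∃ l ∈ closure C, IsLUB C l := by
  obtain ⟨x, hxC, hx, hfar⟩ := exists_isAlmostFarthestSeq hne
  obtain ⟨b, hb⟩ := hbdd
  obtain ⟨l, hl⟩ := hreg x hx ⟨b, forall_mem_range.2 fun n => hb (hxC n)⟩
  exact ⟨l, mem_closure_of_tendsto hl (Eventually.of_forall hxC),
    hfar.isLUB_of_tendsto hC hxC hx hl⟩

theorem IsChain.exists_isGLB_mem_closure
    (hreg : ∀ x : ℕ → α, Antitone x → BddBelow (range x) → ∃ l, Tendsto x atTop (𝓝 l))
    (hC : IsChain (· ≤ ·) C) (hne : C.Nonempty) (hbdd : BddBelow C) :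
    ∃ l ∈ closure C, IsGLB C l :=
  -- instance search does not see `OrderClosedTopology αᵒᵈ` through the metric topology of `αᵒᵈ`
  @IsChain.exists_isLUB_mem_closure αᵒᵈ _ _ C instOrderClosedTopologyOrderDual
    hreg hC.symm hne hbdd

end Greedy

section OrderedGroup

variable {X : Type*} [AddCommGroup X] [PartialOrder X] [IsOrderedAddMonoid X]
  [TopologicalSpace X] [IsTopologicalAddGroup X]

lemma orderClosedTopology_of_isClosed_nonneg_s11 (h : IsClosed {x : X | 0 ≤ x}) :
    OrderClosedTopology X where
  isClosed_le' := by
    convert h.preimage (continuous_snd.sub continuous_fst) using 1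
    ext
    simp [sub_nonneg]

lemma exists_tendsto_of_antitone_of_bddBelow
    (hreg : ∀ x : ℕ → X, Monotone x → BddAbove (range x) → ∃ l, Tendsto x atTop (𝓝 l))
    (x : ℕ → X) (hx : Antitone x) (hbdd : BddBelow (range x)) :
    ∃ l, Tendsto x atTop (𝓝 l) := by
  obtain ⟨b, hb⟩ := hbdd
  obtain ⟨l, hl⟩ := hreg (-x) (fun _ _ h => neg_le_neg (hx h))
    ⟨-b, forall_mem_range.2 fun n => neg_le_neg (hb (mem_range_self n))⟩
  exact ⟨-l, by simpa using hl.neg⟩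

end OrderedGroup

theorem biChainComplete_of_regular_general {X : Type*} [NormedAddCommGroup X] [PartialOrder X]
    (hadd : ∀ x y z : X, x ≤ y → x + z ≤ y + z)
    (hcone : IsClosed {x : X | 0 ≤ x})
    (hreg : ∀ x : ℕ → X, (∀ n, x n ≤ x (n + 1)) → (∃ b : X, ∀ n, x n ≤ b) →
      ∃ l : X, Filter.Tendsto x Filter.atTop (nhds l))
    (D : Set X) (hclosed : IsClosed D)
    (hind : ∀ C : Set X, C ⊆ D → C.Nonempty → IsChain (· ≤ ·) C →
      (∃ b ∈ D, ∀ c ∈ C, c ≤ b) ∧ (∃ a ∈ D, ∀ c ∈ C, a ≤ c)) :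
    ∀ C : Set X, C ⊆ D → C.Nonempty → IsChain (· ≤ ·) C →
      (∃ b ∈ D, IsLUB C b) ∧ (∃ a ∈ D, IsGLB C a) := by
  intro C hCD hne hC
  have : IsOrderedAddMonoid X :=
    ⟨fun a b hab c => hadd a b c hab,
      fun a b hab c => by simpa only [add_comm c] using hadd a b c hab⟩
  have := orderClosedTopology_of_isClosed_nonneg_s11 hcone
  have hreg' : ∀ x : ℕ → X, Monotone x → BddAbove (range x) → ∃ l, Tendsto x atTop (𝓝 l) :=
    fun x hx ⟨b, hb⟩ => hreg x (fun n => hx n.le_succ) ⟨b, fun n => hb (mem_range_self n)⟩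
  obtain ⟨⟨b, -, hb⟩, ⟨a, -, ha⟩⟩ := hind C hCD hne hC
  obtain ⟨l, hlC, hl⟩ := hC.exists_isLUB_mem_closure hreg' hne ⟨b, hb⟩
  obtain ⟨g, hgC, hg⟩ :=
    hC.exists_isGLB_mem_closure (exists_tendsto_of_antitone_of_bddBelow hreg') hne ⟨a, ha⟩
  have hclosureD : closure C ⊆ D := closure_minimal hCD hclosed
  exact ⟨⟨l, hclosureD hlC, hl⟩, ⟨g, hclosureD hgC, hg⟩⟩

/-- Every nonempty norm-closed bi-inductive subset of a regular partially ordered Banach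
space is bi-chain-complete. -/
theorem biChainComplete_of_regular {X : Type*} [NormedAddCommGroup X] [NormedSpace ℝ X]
    [CompleteSpace X] [PartialOrder X]
    (hadd : ∀ x y z : X, x ≤ y → x + z ≤ y + z)
    (hsmul : ∀ α : ℝ, 0 ≤ α → ∀ x y : X, x ≤ y → α • x ≤ α • y)
    (hcone : IsClosed {x : X | 0 ≤ x})
    (hreg : ∀ x : ℕ → X, (∀ n, x n ≤ x (n + 1)) → (∃ b : X, ∀ n, x n ≤ b) →
      ∃ l : X, Filter.Tendsto x Filter.atTop (nhds l))
    (D : Set X) (hD : D.Nonempty) (hclosed : IsClosed D)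
    (hind : ∀ C : Set X, C ⊆ D → C.Nonempty → IsChain (· ≤ ·) C →
      (∃ b ∈ D, ∀ c ∈ C, c ≤ b) ∧ (∃ a ∈ D, ∀ c ∈ C, a ≤ c)) :
    ∀ C : Set X, C ⊆ D → C.Nonempty → IsChain (· ≤ ·) C →
      (∃ b ∈ D, IsLUB C b) ∧ (∃ a ∈ D, IsGLB C a) :=
  biChainComplete_of_regular_general hadd hcone hreg D hclosed hind
end

section
/- Let X be a reflexive Banach lattice, i.e. a real Banach space which is a lattice under a partial order compatible with the vector space structure, such that |x| ≤ |y| implies ‖x‖ ≤ ‖y‖, and such that the canonical embedding of X into its double dual is surjective. Then X is bi-chain-complete: for all u ≼ v in X, every nonempty chain C ⊆ [u, v] = {z : u ≼ z ≼ v} has both a least ≼-upper bound and a greatest ≼-lower bound belonging to [u, v]. -/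
/-!
In a reflexive space Banach–Alaoglu in the bidual gives every norm-bounded net a weak cluster
point. A chain in `[u, v]`, directed by its own order, is such a net because the norm is solid.
Positive functionals are monotone, so a weak cluster point `b` satisfies `f c ≤ f b ≤ f w` for
every element `c` and upper bound `w` of the chain; as the positive cone is closed and convex,
Hahn–Banach shows that positive functionals determine the order, so `b` is the supremum.
Infima are suprema of the negated chain.
-/

open Filter Set NormedSpace
open scoped Pointwise

theorem exists_forall_clusterPt_dual_of_norm_le {X : Type*} [NormedAddCommGroup X]
    [NormedSpace ℝ X] (hrefl : Function.Surjective (inclusionInDoubleDual ℝ X))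
    {ι : Type*} {l : Filter ι} [l.NeBot] {x : ι → X} {R : ℝ} (hx : ∀ i, ‖x i‖ ≤ R) :
    ∃ b : X, ∀ f : StrongDual ℝ X, ClusterPt (f b) (l.map fun i ↦ f (x i)) := by
  let g (i : ι) : WeakDual ℝ (StrongDual ℝ X) :=
    StrongDual.toWeakDual (inclusionInDoubleDual ℝ X (x i))
  have hg : l.map g ≤ 𝓟 (WeakDual.toStrongDual ⁻¹' Metric.closedBall 0 R) :=
    le_principal_iff.2 <| mem_map.2 <| univ_mem' fun i ↦ Metric.mem_closedBall.2 <|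
      (dist_zero_right (WeakDual.toStrongDual (g i))).trans_le <|
        (double_dual_bound ℝ X (x i)).trans (hx i)
  obtain ⟨φ, -, hφ⟩ := WeakDual.isCompact_closedBall 0 R hg
  obtain ⟨b, hb⟩ := hrefl (WeakDual.toStrongDual φ)
  refine ⟨b, fun f ↦ ?_⟩
  have hφf : φ f = f b := (DFunLike.congr_fun hb f).symm
  have := hφ.map (WeakDual.eval_continuous f).continuousAt (tendsto_map'_iff.2 tendsto_map)
  rwa [hφf] at this

section OrderedNormedSpace

variable {X : Type*} [NormedAddCommGroup X] [PartialOrder X] [IsOrderedAddMonoid X]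
  [NormedSpace ℝ X] [PosSMulMono ℝ X] [OrderClosedTopology X]

theorem le_of_forall_monotone_dual {x y : X}
    (h : ∀ f : StrongDual ℝ X, Monotone f → f x ≤ f y) : x ≤ y := by
  by_contra hxy
  obtain ⟨f, hf, hfyx⟩ := (ProperCone.positive ℝ X).hyperplane_separation_point
    (x₀ := y - x) (by simpa using hxy)
  have := h f ((monotone_iff_map_nonneg f).2 hf)
  rw [map_sub] at hfyx
  linarith

theorem isLUB_of_forall_clusterPt_dual {S : Set X} {b : X}
    (hb : ∀ f : StrongDual ℝ X, ClusterPt (f b) (atTop.map fun c : S ↦ f c)) : IsLUB S b := by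
  have mem_of_eventually {f : StrongDual ℝ X} {s : Set ℝ} (hs : IsClosed s)
      (hfs : ∀ᶠ c : S in atTop, f c ∈ s) : f b ∈ s :=
    hs.closure_subset <| mem_closure_iff_clusterPt.2 <| (hb f).mono (le_principal_iff.2 hfs)
  refine ⟨fun c hc ↦ le_of_forall_monotone_dual fun f hf ↦ ?_,
    fun w hw ↦ le_of_forall_monotone_dual fun f hf ↦ ?_⟩
  · exact mem_of_eventually isClosed_Ici <|
      (eventually_ge_atTop (⟨c, hc⟩ : S)).mono fun d hd ↦ hf hd
  · exact mem_of_eventually isClosed_Iic <| .of_forall fun d ↦ hf (hw d.2)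

theorem exists_isLUB_of_isBounded_of_directedOn
    (hrefl : Function.Surjective (inclusionInDoubleDual ℝ X)) {S : Set X} (hne : S.Nonempty)
    (hdir : DirectedOn (· ≤ ·) S) (hbdd : Bornology.IsBounded S) : ∃ b, IsLUB S b := by
  have := hne.to_subtype
  have := hdir.isDirectedOrder
  obtain ⟨R, hR⟩ := isBounded_iff_forall_norm_le.1 hbdd
  obtain ⟨b, hb⟩ := exists_forall_clusterPt_dual_of_norm_le hrefl (l := atTop)
    (x := ((↑) : S → X)) fun c ↦ hR c c.2
  exact ⟨b, isLUB_of_forall_clusterPt_dual hb⟩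

end OrderedNormedSpace

theorem IsLUB.mem_Icc_of_subset_Icc {α : Type*} [Preorder α] {s : Set α} {u v b : α}
    (h : IsLUB s b) (hs : s ⊆ Icc u v) (hne : s.Nonempty) : b ∈ Icc u v :=
  let ⟨_, hc⟩ := hne
  ⟨(hs hc).1.trans (h.1 hc), h.2 fun _ hd ↦ (hs hd).2⟩

theorem HasSolidNorm.isBounded_Icc {α : Type*} [NormedAddCommGroup α] [Lattice α]
    [IsOrderedAddMonoid α] [HasSolidNorm α] (u v : α) : Bornology.IsBounded (Icc u v) :=
  isBounded_iff_forall_norm_le.2 ⟨‖|u| ⊔ |v|‖, fun _ hc ↦ norm_le_norm_of_abs_le_abs <| by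
    rw [abs_of_nonneg ((abs_nonneg u).trans le_sup_left), abs_le']
    exact ⟨hc.2.trans ((le_abs_self v).trans le_sup_right),
      (neg_le_neg hc.1).trans ((neg_le_abs u).trans le_sup_left)⟩⟩

theorem reflexiveBanachLattice_biChainComplete_general {X : Type*} [NormedAddCommGroup X] [Lattice X]
    [IsOrderedAddMonoid X] [HasSolidNorm X]
    [NormedSpace ℝ X]
    (hsmul : ∀ α : ℝ, 0 ≤ α → ∀ x : X, 0 ≤ x → 0 ≤ α • x)
    (hrefl : Function.Surjective (NormedSpace.inclusionInDoubleDual ℝ X)) :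
    ∀ u v : X, u ≤ v →
      ∀ C : Set X, C ⊆ Set.Icc u v → C.Nonempty → IsChain (· ≤ ·) C →
        (∃ b ∈ Set.Icc u v, IsLUB C b) ∧ (∃ a ∈ Set.Icc u v, IsGLB C a) := by
  have := PosSMulMono.of_smul_nonneg hsmul
  intro u v _ C hC hne hch
  have hC' : -C ⊆ Icc (-v) (-u) := by rw [← neg_Icc]; exact neg_subset_neg.2 hC
  have hch' : IsChain (· ≤ ·) (-C) := by
    rw [← image_neg_eq_neg]
    exact hch.symm.image_of_map_rel _ _ _ fun _ _ ↦ neg_le_neg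
  obtain ⟨b, hb⟩ := exists_isLUB_of_isBounded_of_directedOn hrefl hne hch.directedOn
    ((HasSolidNorm.isBounded_Icc u v).subset hC)
  obtain ⟨a, ha⟩ := exists_isLUB_of_isBounded_of_directedOn hrefl hne.neg hch'.directedOn
    ((HasSolidNorm.isBounded_Icc (-v) (-u)).subset hC')
  refine ⟨⟨b, hb.mem_Icc_of_subset_Icc hC hne, hb⟩, ⟨-a, ?_, isLUB_neg.1 ha⟩⟩
  simpa [neg_Icc] using neg_mem_neg.2 (ha.mem_Icc_of_subset_Icc hC' hne.neg)

/-- Every reflexive Banach lattice is bi-chain-complete: every nonempty chain in an order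
interval `[u, v]` has a least upper bound and a greatest lower bound in `[u, v]`. -/
theorem reflexiveBanachLattice_biChainComplete {X : Type*} [NormedAddCommGroup X] [Lattice X]
    [IsOrderedAddMonoid X] [HasSolidNorm X]
    [NormedSpace ℝ X] [CompleteSpace X]
    (hsmul : ∀ α : ℝ, 0 ≤ α → ∀ x : X, 0 ≤ x → 0 ≤ α • x)
    (hrefl : Function.Surjective (NormedSpace.inclusionInDoubleDual ℝ X)) :
    ∀ u v : X, u ≤ v →
      ∀ C : Set X, C ⊆ Set.Icc u v → C.Nonempty → IsChain (· ≤ ·) C →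
        (∃ b ∈ Set.Icc u v, IsLUB C b) ∧ (∃ a ∈ Set.Icc u v, IsGLB C a) :=
  reflexiveBanachLattice_biChainComplete_general hsmul hrefl
end

section
/- Let (X, ≼) be a chain-complete poset (every nonempty chain in X has a least ≼-upper bound in X) and let A ⊆ X be a nonempty inductive subset possessing only finitely many ≼-maximal elements. Then A is universally inductive in X: every nonempty chain C ⊆ X such that every element of C has a ≼-upper bound in A admits a ≼-upper bound in A. -/
/-!
By Zorn's lemma every element of the inductive set `A` lies below a maximal element of `A`, so
each element `c` of the chain has a nonempty set of maximal elements of `A` above it. These sets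
are finite and shrink as `c` grows along the chain; the smallest one is therefore contained in all
the others, and any of its elements bounds the chain.
-/

theorem IsChain.nonempty_sInter_of_finite {α : Type*} {𝒮 : Set (Set α)}
    (h𝒮 : IsChain (· ⊆ ·) 𝒮) (hne : 𝒮.Nonempty) (hfin : ∀ s ∈ 𝒮, s.Finite)
    (hnonempty : ∀ s ∈ 𝒮, s.Nonempty) : (⋂₀ 𝒮).Nonempty := by
  obtain ⟨s, hs, hmin⟩ := (measure Set.ncard).wf.has_min 𝒮 hne
  have hs_subset : ∀ t ∈ 𝒮, s ⊆ t := by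
    intro t ht
    rcases h𝒮.total hs ht with hst | hts
    · exact hst
    · rw [Set.eq_of_subset_of_ncard_le hts (Nat.le_of_not_lt (hmin t ht)) (hfin s hs)]
  obtain ⟨x, hx⟩ := hnonempty s hs
  exact ⟨x, fun t ht => hs_subset t ht hx⟩

theorem IsChain.exists_upperBound_mem_of_finite {α : Type*} [Preorder α] {C S : Set α}
    (hC : IsChain (· ≤ ·) C) (hne : C.Nonempty) (hS : S.Finite)
    (hbdd : ∀ c ∈ C, ∃ s ∈ S, c ≤ s) : ∃ s ∈ S, ∀ c ∈ C, c ≤ s := by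
  set above : α → Set α := fun c => {s ∈ S | c ≤ s}
  have hchain : IsChain (· ⊆ ·) (above '' C) :=
    (hC.image_of_map_rel _ (fun s t : Set α => t ⊆ s) above
      fun _ _ hcd _ hs => ⟨hs.1, hcd.trans hs.2⟩).symm
  obtain ⟨s, hs⟩ := hchain.nonempty_sInter_of_finite (hne.image above)
    (Set.forall_mem_image.2 fun _ _ => hS.subset fun _ h => h.1)
    (Set.forall_mem_image.2 hbdd)
  rw [Set.mem_sInter, Set.forall_mem_image] at hs
  obtain ⟨c₀, hc₀⟩ := hne
  exact ⟨s, (hs hc₀).1, fun c hc => (hs hc).2⟩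

theorem universallyInductive_of_finitely_many_maximal_general {X : Type*} [PartialOrder X]
    (A : Set X)
    (hind : ∀ C : Set X, C ⊆ A → C.Nonempty → IsChain (· ≤ ·) C →
      ∃ b ∈ A, ∀ c ∈ C, c ≤ b)
    (hfin : {a : X | a ∈ A ∧ ∀ b ∈ A, a ≤ b → b = a}.Finite) :
    ∀ C : Set X, C.Nonempty → IsChain (· ≤ ·) C → (∀ c ∈ C, ∃ a ∈ A, c ≤ a) →
      ∃ a ∈ A, ∀ c ∈ C, c ≤ a := by
  intro C hne hC hCA
  have le_maximal : ∀ a ∈ A, ∃ m ∈ {a : X | a ∈ A ∧ ∀ b ∈ A, a ≤ b → b = a}, a ≤ m := by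
    intro a ha
    obtain ⟨m, ham, hm⟩ :=
      zorn_le_nonempty₀ A (fun D hD hDc y hy => hind D hD ⟨y, hy⟩ hDc) a ha
    exact ⟨m, ⟨hm.prop, fun b hb hmb => (hm.le_of_ge hb hmb).antisymm hmb⟩, ham⟩
  obtain ⟨m, hm, hCm⟩ := hC.exists_upperBound_mem_of_finite hne hfin fun c hc => by
    obtain ⟨a, ha, hca⟩ := hCA c hc
    obtain ⟨m, hm, ham⟩ := le_maximal a ha
    exact ⟨m, hm, hca.trans ham⟩
  exact ⟨m, hm.1, hCm⟩

/-- In a chain-complete poset, every nonempty inductive subset with finitely many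
maximal elements is universally inductive. -/
theorem universallyInductive_of_finitely_many_maximal {X : Type*} [PartialOrder X]
    (hcc : ∀ C : Set X, C.Nonempty → IsChain (· ≤ ·) C → ∃ b : X, IsLUB C b)
    (A : Set X) (hA : A.Nonempty)
    (hind : ∀ C : Set X, C ⊆ A → C.Nonempty → IsChain (· ≤ ·) C →
      ∃ b ∈ A, ∀ c ∈ C, c ≤ b)
    (hfin : {a : X | a ∈ A ∧ ∀ b ∈ A, a ≤ b → b = a}.Finite) :
    ∀ C : Set X, C.Nonempty → IsChain (· ≤ ·) C → (∀ c ∈ C, ∃ a ∈ A, c ≤ a) →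
      ∃ a ∈ A, ∀ c ∈ C, c ≤ a :=
  universallyInductive_of_finitely_many_maximal_general A hind hfin
end

section
/- Let X be a Hausdorff topological space with a partial order ≼ such that all intervals [u) = {x : u ≼ x} and (u] = {x : x ≼ u} are closed. Then every nonempty compact subset A of X is universally inductive in X: every nonempty chain C ⊆ X such that every element of C has a ≼-upper bound in A admits a ≼-upper bound in A. -/
/-! The closed sets `[c)`, `c ∈ C`, have the finite intersection property relative to `A`:
finitely many of them have an upper bound in `C` because `C` is directed, and that bound lies
below a point of `A`. Compactness of `A` then yields a point of `A` in all of them. -/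

open Set

theorem IsCompact.exists_mem_upperBounds_of_directedOn {X : Type*} [TopologicalSpace X]
    [Preorder X] (hIci : ∀ u : X, IsClosed (Ici u)) {A C : Set X} (hA : IsCompact A)
    (hCne : C.Nonempty) (hC : DirectedOn (· ≤ ·) C) (hub : ∀ c ∈ C, ∃ a ∈ A, c ≤ a) :
    ∃ a ∈ A, a ∈ upperBounds C := by
  have : Nonempty C := hCne.to_subtype
  have hfin : ∀ u : Finset C, (A ∩ ⋂ c ∈ u, Ici (c : X)).Nonempty := by
    intro u
    obtain ⟨z, hz⟩ := (directedOn_iff_directed.mp hC).finset_le u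
    obtain ⟨a, ha, hza⟩ := hub z z.2
    exact ⟨a, ha, mem_iInter₂.mpr fun c hc => (hz c hc).trans hza⟩
  obtain ⟨a, ha, haC⟩ := hA.inter_iInter_nonempty (fun c : C => Ici (c : X)) (fun c => hIci c) hfin
  exact ⟨a, ha, fun c hc => mem_iInter.mp haC ⟨c, hc⟩⟩

theorem universallyInductive_of_compact_general {X : Type*} [TopologicalSpace X]
    [PartialOrder X]
    (hnat : ∀ u : X, IsClosed {x : X | u ≤ x} ∧ IsClosed {x : X | x ≤ u})
    (A : Set X) (hcomp : IsCompact A) :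
    ∀ C : Set X, C.Nonempty → IsChain (· ≤ ·) C → (∀ c ∈ C, ∃ a ∈ A, c ≤ a) →
      ∃ a ∈ A, ∀ c ∈ C, c ≤ a :=
  fun _ hCne hchain hub =>
    hcomp.exists_mem_upperBounds_of_directedOn (fun u => (hnat u).1) hCne hchain.directedOn hub

/-- Every nonempty compact subset of a partially ordered Hausdorff topological space
(with closed order intervals) is universally inductive. -/
theorem universallyInductive_of_compact {X : Type*} [TopologicalSpace X] [T2Space X]
    [PartialOrder X]
    (hnat : ∀ u : X, IsClosed {x : X | u ≤ x} ∧ IsClosed {x : X | x ≤ u})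
    (A : Set X) (hA : A.Nonempty) (hcomp : IsCompact A) :
    ∀ C : Set X, C.Nonempty → IsChain (· ≤ ·) C → (∀ c ∈ C, ∃ a ∈ A, c ≤ a) →
      ∃ a ∈ A, ∀ c ∈ C, c ≤ a :=
  universallyInductive_of_compact_general hnat A hcomp
end
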